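/- arXiv:2605.21848 — 2 statements merged into one kernel-verified Lean document; each statement's English description precedes it below -/
import Mathlib

section
/- For every fixed real b > 0 and every real a > 0, the second derivative with respect to a of the function a ↦ B(a/2, b/2) equals (1/4) · B(a/2, b/2) · [ (ψ(a/2) − ψ((a+b)/2))^2 + ψ′(a/2) − ψ′((a+b)/2) ]. -/
/-- Beta function `B(a,b) = Γ(a)Γ(b)/Γ(a+b)`. -/
noncomputable def betaFn (a b : ℝ) : ℝ :=
  Real.Gamma a * Real.Gamma b / Real.Gamma (a + b)

/-- Digamma function `ψ(x) = d/dx log Γ(x)`. -/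
noncomputable def digamma (x : ℝ) : ℝ :=
  deriv (fun y => Real.log (Real.Gamma y)) x

/-- Trigamma function `ψ′(x) = d²/dx² log Γ(x)`. -/
noncomputable def trigamma (x : ℝ) : ℝ :=
  deriv (deriv (fun y => Real.log (Real.Gamma y))) x
/-! Since `log B(x, c) = log Γ(x) + log Γ(c) - log Γ(x + c)`, the logarithmic derivative of
`x ↦ B(x, c)` is `ψ(x) - ψ(x + c)`, and differentiating `B(x, c) (ψ(x) - ψ(x + c))` once more gives
`B(x, c) ((ψ(x) - ψ(x + c))² + ψ′(x) - ψ′(x + c))`. The substitution `x = a / 2` contributes the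
factor `1 / 4`. All derivatives exist because `Γ` is real-analytic on `(0, ∞)`, being the restriction
of the holomorphic complex Gamma function. -/

open Real Set Filter Topology

lemma Real.analyticAt_Gamma {x : ℝ} (hx : 0 < x) : AnalyticAt ℝ Gamma x := by
  have hC : AnalyticAt ℂ Complex.Gamma x := by
    refine DifferentiableOn.analyticOnNhd (s := {s : ℂ | 0 < s.re}) (fun s hs => ?_)
      (isOpen_lt continuous_const Complex.continuous_re) x (by simpa using hx)
    refine (Complex.differentiableAt_Gamma s fun m hm => ?_).differentiableWithinAt
    have : 0 < s.re := hs
    simp only [hm, Complex.neg_re, Complex.natCast_re, Left.neg_pos_iff] at this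
    linarith
  have hR := (Complex.reCLM.analyticAt _).comp
    (hC.restrictScalars.comp (Complex.ofRealCLM.analyticAt x))
  convert hR using 1
  ext y
  simp [Complex.Gamma_ofReal]

lemma analyticOnNhd_logGamma : AnalyticOnNhd ℝ (fun y => log (Gamma y)) (Ioi 0) :=
  fun _ hx => (Real.analyticAt_Gamma hx).log (Gamma_pos_of_pos hx)

lemma hasDerivAt_logGamma {x : ℝ} (hx : 0 < x) :
    HasDerivAt (fun y => log (Gamma y)) (digamma x) x :=
  (analyticOnNhd_logGamma x hx).differentiableAt.hasDerivAt

lemma hasDerivAt_digamma {x : ℝ} (hx : 0 < x) : HasDerivAt digamma (trigamma x) x :=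
  (analyticOnNhd_logGamma.deriv x hx).differentiableAt.hasDerivAt

lemma hasDerivAt_Gamma_mul_digamma {x : ℝ} (hx : 0 < x) :
    HasDerivAt Gamma (Gamma x * digamma x) x := by
  have hΓ := (Real.analyticAt_Gamma hx).differentiableAt.hasDerivAt
  have hψ : digamma x = deriv Gamma x / Gamma x :=
    (hasDerivAt_logGamma hx).unique (hΓ.log (Gamma_pos_of_pos hx).ne')
  rwa [hψ, mul_div_cancel₀ _ (Gamma_pos_of_pos hx).ne']

lemma hasDerivAt_betaFn_left {x c : ℝ} (hx : 0 < x) (hc : 0 < c) :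
    HasDerivAt (fun y => betaFn y c) (betaFn x c * (digamma x - digamma (x + c))) x := by
  have hxc : 0 < x + c := by linarith
  have h := ((hasDerivAt_Gamma_mul_digamma hx).mul_const (Gamma c)).div
    ((hasDerivAt_Gamma_mul_digamma hxc).comp_add_const x c) (Gamma_pos_of_pos hxc).ne'
  refine h.congr_deriv ?_
  unfold betaFn
  field_simp [(Gamma_pos_of_pos hxc).ne']

lemma hasDerivAt_deriv_betaFn_left {x c : ℝ} (hx : 0 < x) (hc : 0 < c) :
    HasDerivAt (deriv fun y => betaFn y c)
      (betaFn x c * ((digamma x - digamma (x + c)) ^ 2 + (trigamma x - trigamma (x + c)))) x := by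
  have hderiv : deriv (fun y => betaFn y c) =ᶠ[𝓝 x]
      fun y => betaFn y c * (digamma y - digamma (y + c)) :=
    eventually_of_mem (Ioi_mem_nhds hx) fun y hy => (hasDerivAt_betaFn_left hy hc).deriv
  have h := (hasDerivAt_betaFn_left hx hc).mul
    ((hasDerivAt_digamma hx).sub ((hasDerivAt_digamma (by linarith)).comp_add_const x c))
  exact (h.congr_of_eventuallyEq hderiv).congr_deriv (by rw [Pi.sub_apply]; ring)

-- No differentiability is needed: for `k ≠ 0` the substitution is a linear isomorphism, and for
-- `k = 0` both sides vanish.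
lemma deriv_comp_div_const (f : ℝ → ℝ) (k : ℝ) :
    deriv (fun y => f (y / k)) = fun y => deriv f (y / k) / k := by
  ext y
  simpa only [div_eq_inv_mul, smul_eq_mul, mul_comm] using deriv_comp_mul_left k⁻¹ f y

lemma deriv_deriv_comp_div_const (f : ℝ → ℝ) (k a : ℝ) :
    deriv (deriv fun y => f (y / k)) a = deriv (deriv f) (a / k) / k ^ 2 := by
  rw [deriv_comp_div_const, deriv_div_const, deriv_comp_div_const]
  ring

theorem stmt_3 (b : ℝ) (hb : 0 < b) (a : ℝ) (ha : 0 < a) :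
    deriv (deriv (fun a : ℝ => betaFn (a / 2) (b / 2))) a
      = (1 / 4) * betaFn (a / 2) (b / 2) *
          ((digamma (a / 2) - digamma ((a + b) / 2)) ^ 2
            + (trigamma (a / 2) - trigamma ((a + b) / 2))) := by
  rw [deriv_deriv_comp_div_const (fun x => betaFn x (b / 2)),
    (hasDerivAt_deriv_betaFn_left (half_pos ha) (half_pos hb)).deriv, add_div]
  ring
end

section
/- (Lemma 1, mean.) For all natural numbers b ≥ 1 and N ≥ b + 2, the integral over (0,∞) of N · log(1 + b x/(N − b − 1)) · f_{b, N−b−1}(x) with respect to x equals N · (ψ((N−1)/2) − ψ((N−b−1)/2)). -/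
/-
The substitution `x = (m / a) (1 / u - 1)` carries the F(a, m) density on `(0, ∞)` to the
Beta(m/2, a/2) density on `(0, 1)` and turns `log (1 + a x / m)` into `-log u`. The Beta log-moment
`∫ log u · u^(p-1) (1-u)^(q-1) du` is the `p`-derivative of `B(p, q) = Γ(p) Γ(q) / Γ(p + q)`
(differentiation under the integral sign), and the logarithmic derivative of `B` in `p` is
`ψ(p) - ψ(p + q)`.
-/

open MeasureTheory

/-- Density of the F-distribution with degrees of freedom `(a, b)`. -/
noncomputable def fDensity (a b x : ℝ) : ℝ :=
  (Real.Gamma ((a + b) / 2) / (Real.Gamma (a / 2) * Real.Gamma (b / 2))) *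
    (a / b) ^ (a / 2) * x ^ (a / 2 - 1) * (1 + a * x / b) ^ (-((a + b) / 2))

open Real Set Filter Topology ProbabilityTheory

lemma ofReal_rpow_mul_one_sub_rpow {u : ℝ} (hu : u ∈ Icc (0 : ℝ) 1) (p q : ℝ) :
    (u : ℂ) ^ ((p : ℂ) - 1) * (1 - (u : ℂ)) ^ ((q : ℂ) - 1)
      = ((u ^ (p - 1) * (1 - u) ^ (q - 1) : ℝ) : ℂ) := by
  push_cast [Complex.ofReal_cpow hu.1, Complex.ofReal_cpow (sub_nonneg.2 hu.2)]
  rfl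

lemma betaIntegral_ofReal (p q : ℝ) :
    Complex.betaIntegral p q
      = ((∫ u in Ioc (0 : ℝ) 1, u ^ (p - 1) * (1 - u) ^ (q - 1) : ℝ) : ℂ) := by
  rw [Complex.betaIntegral, intervalIntegral.integral_of_le zero_le_one, ← integral_complex_ofReal]
  exact setIntegral_congr_fun measurableSet_Ioc fun u hu ↦
    ofReal_rpow_mul_one_sub_rpow (Ioc_subset_Icc_self hu) p q

section BetaIntegral

variable {p q : ℝ}

lemma integrableOn_rpow_mul_one_sub_rpow (hp : 0 < p) (hq : 0 < q) :
    IntegrableOn (fun u : ℝ ↦ u ^ (p - 1) * (1 - u) ^ (q - 1)) (Ioo 0 1) := by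
  have h := (Complex.betaIntegral_convergent (u := p) (v := q) (by simpa) (by simpa)).1
  rw [← integrableOn_Icc_iff_integrableOn_Ioc] at h
  refine (IntegrableOn.congr_fun h.re (fun u hu ↦ ?_) measurableSet_Icc).mono_set
    Ioo_subset_Icc_self
  simp [ofReal_rpow_mul_one_sub_rpow hu]

lemma integral_rpow_mul_one_sub_rpow (hp : 0 < p) (hq : 0 < q) :
    ∫ u in Ioo (0 : ℝ) 1, u ^ (p - 1) * (1 - u) ^ (q - 1) = beta p q := by
  rw [beta_eq_betaIntegralReal p q hp hq, betaIntegral_ofReal p q, Complex.ofReal_re,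
    integral_Ioc_eq_integral_Ioo]

lemma abs_log_le_rpow_neg {u ε : ℝ} (hu₀ : 0 < u) (hu₁ : u ≤ 1) (hε : 0 < ε) :
    |log u| ≤ u ^ (-ε) / ε := by
  rw [abs_of_nonpos (log_nonpos hu₀.le hu₁), ← log_inv, rpow_neg hu₀.le, ← inv_rpow hu₀.le]
  exact log_le_rpow_div (inv_nonneg.2 hu₀.le) hε

lemma integrableOn_abs_log_mul_rpow_mul_one_sub_rpow (hp : 0 < p) (hq : 0 < q) :
    IntegrableOn (fun u : ℝ ↦ |log u| * (u ^ (p - 1) * (1 - u) ^ (q - 1))) (Ioo 0 1) := by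
  refine ((integrableOn_rpow_mul_one_sub_rpow (half_pos hp) hq).const_mul (2 / p)).mono'
    (by fun_prop) ((ae_restrict_iff' measurableSet_Ioo).2 (.of_forall fun u ⟨hu₀, hu₁⟩ ↦ ?_))
  have h1u : 0 ≤ (1 - u) ^ (q - 1) := rpow_nonneg (by linarith) _
  rw [Real.norm_of_nonneg (by positivity)]
  calc |log u| * (u ^ (p - 1) * (1 - u) ^ (q - 1))
      ≤ u ^ (-(p / 2)) / (p / 2) * (u ^ (p - 1) * (1 - u) ^ (q - 1)) := by
        gcongr; exact abs_log_le_rpow_neg hu₀ hu₁.le (half_pos hp)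
    _ = 2 / p * (u ^ (-(p / 2)) * u ^ (p - 1) * (1 - u) ^ (q - 1)) := by ring
    _ = 2 / p * (u ^ (p / 2 - 1) * (1 - u) ^ (q - 1)) := by
        rw [← rpow_add hu₀, show -(p / 2) + (p - 1) = p / 2 - 1 by ring]

lemma hasDerivAt_integral_rpow_mul_one_sub_rpow (hp : 0 < p) (hq : 0 < q) :
    HasDerivAt (fun s ↦ ∫ u in Ioo (0 : ℝ) 1, u ^ (s - 1) * (1 - u) ^ (q - 1))
      (∫ u in Ioo (0 : ℝ) 1, log u * (u ^ (p - 1) * (1 - u) ^ (q - 1))) p := by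
  refine (hasDerivAt_integral_of_dominated_loc_of_deriv_le
    (F := fun s u ↦ u ^ (s - 1) * (1 - u) ^ (q - 1))
    (F' := fun s u ↦ log u * (u ^ (s - 1) * (1 - u) ^ (q - 1)))
    (bound := fun u ↦ |log u| * (u ^ (p / 2 - 1) * (1 - u) ^ (q - 1)))
    (Metric.ball_mem_nhds p (half_pos hp)) (.of_forall fun s ↦ by fun_prop)
    (integrableOn_rpow_mul_one_sub_rpow hp hq) (by fun_prop) ?_
    (integrableOn_abs_log_mul_rpow_mul_one_sub_rpow (half_pos hp) hq) ?_).2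
  all_goals refine (ae_restrict_iff' measurableSet_Ioo).2 (.of_forall fun u ⟨hu₀, hu₁⟩ s hs ↦ ?_)
  · have hs' : p / 2 < s := by
      have := (abs_sub_lt_iff.1 (Metric.mem_ball.1 hs)).2; linarith
    have h1u : 0 ≤ (1 - u) ^ (q - 1) := rpow_nonneg (by linarith) _
    rw [norm_mul, Real.norm_eq_abs, Real.norm_of_nonneg (by positivity)]
    exact mul_le_mul_of_nonneg_left (mul_le_mul_of_nonneg_right
      (rpow_le_rpow_of_exponent_ge hu₀ hu₁.le (by linarith)) h1u) (abs_nonneg _)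
  · exact (((hasStrictDerivAt_const_rpow hu₀ (s - 1)).hasDerivAt.comp_sub_const s 1).mul_const
      ((1 - u) ^ (q - 1))).congr_deriv (by ring)

lemma hasDerivAt_log_Gamma {x : ℝ} (hx : 0 < x) :
    HasDerivAt (fun y ↦ log (Gamma y)) (digamma x) x :=
  ((differentiableAt_Gamma fun m ↦ ((neg_nonpos.2 m.cast_nonneg).trans_lt hx).ne').log
    (Gamma_pos_of_pos hx).ne').hasDerivAt

lemma hasDerivAt_log_beta_left (hp : 0 < p) (hq : 0 < q) :
    HasDerivAt (fun s ↦ log (beta s q)) (digamma p - digamma (p + q)) p := by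
  have h := ((hasDerivAt_log_Gamma hp).add_const (log (Gamma q))).sub
    ((hasDerivAt_log_Gamma (add_pos hp hq)).comp_add_const p q)
  refine h.congr_of_eventuallyEq (eventually_gt_nhds hp |>.mono fun s hs ↦ ?_)
  dsimp only
  rw [ProbabilityTheory.beta, log_div (mul_pos (Gamma_pos_of_pos hs) (Gamma_pos_of_pos hq)).ne'
    (Gamma_pos_of_pos (add_pos hs hq)).ne', log_mul (Gamma_pos_of_pos hs).ne'
    (Gamma_pos_of_pos hq).ne']
  rfl

lemma integral_log_mul_rpow_mul_one_sub_rpow (hp : 0 < p) (hq : 0 < q) :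
    ∫ u in Ioo (0 : ℝ) 1, log u * (u ^ (p - 1) * (1 - u) ^ (q - 1))
      = beta p q * (digamma p - digamma (p + q)) := by
  have hβ : HasDerivAt (fun s ↦ beta s q)
      (∫ u in Ioo (0 : ℝ) 1, log u * (u ^ (p - 1) * (1 - u) ^ (q - 1))) p :=
    (hasDerivAt_integral_rpow_mul_one_sub_rpow hp hq).congr_of_eventuallyEq
      (eventually_gt_nhds hp |>.mono fun s hs ↦ (integral_rpow_mul_one_sub_rpow hs hq).symm)
  have h := (hβ.log (beta_pos hp hq).ne').unique (hasDerivAt_log_beta_left hp hq)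
  rw [div_eq_iff (beta_pos hp hq).ne'] at h
  rw [h, mul_comm]

lemma integral_neg_log_mul_betaPDFReal (hp : 0 < p) (hq : 0 < q) :
    ∫ u in Ioo (0 : ℝ) 1, -log u * betaPDFReal p q u = digamma (p + q) - digamma p := by
  have h : ∀ u ∈ Ioo (0 : ℝ) 1, -log u * betaPDFReal p q u
      = -(beta p q)⁻¹ * (log u * (u ^ (p - 1) * (1 - u) ^ (q - 1))) := fun u hu ↦ by
    rw [betaPDFReal, if_pos (mem_Ioo.1 hu)]; ring
  rw [setIntegral_congr_fun measurableSet_Ioo h, integral_const_mul,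
    integral_log_mul_rpow_mul_one_sub_rpow hp hq]
  field_simp [(beta_pos hp hq).ne']
  ring

end BetaIntegral

lemma image_Ioo_zero_one_mul_inv_sub_one {c : ℝ} (hc : 0 < c) :
    (fun u ↦ c * (u⁻¹ - 1)) '' Ioo 0 1 = Ioi 0 := by
  ext x
  constructor
  · rintro ⟨u, ⟨hu₀, hu₁⟩, rfl⟩
    exact mul_pos hc (sub_pos.2 (one_lt_inv₀ hu₀ |>.2 hu₁))
  · intro (hx : 0 < x)
    refine ⟨(1 + x / c)⁻¹,
      ⟨by positivity, inv_lt_one_of_one_lt₀ (lt_add_of_pos_right 1 (div_pos hx hc))⟩, ?_⟩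
    field_simp
    ring

lemma integral_Ioi_zero_eq_integral_Ioo_mul_inv_sub_one {c : ℝ} (hc : 0 < c) (g : ℝ → ℝ) :
    ∫ x in Ioi 0, g x = ∫ u in Ioo 0 1, c / u ^ 2 * g (c * (u⁻¹ - 1)) := by
  have hderiv : ∀ u ∈ Ioo (0 : ℝ) 1,
      HasDerivWithinAt (fun u ↦ c * (u⁻¹ - 1)) (-(c / u ^ 2)) (Ioo 0 1) u := fun u hu ↦
    (((hasDerivAt_inv hu.1.ne').sub_const 1).const_mul c).hasDerivWithinAt.congr_deriv (by ring)
  have hinj : InjOn (fun u : ℝ ↦ c * (u⁻¹ - 1)) (Ioo 0 1) := fun u _ v _ h ↦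
    inv_injective (by simpa [hc.ne'] using h)
  rw [← image_Ioo_zero_one_mul_inv_sub_one hc,
    integral_image_eq_integral_abs_deriv_smul measurableSet_Ioo hderiv hinj]
  refine setIntegral_congr_fun measurableSet_Ioo fun u hu ↦ ?_
  rw [abs_neg, abs_of_pos (by have := hu.1; positivity), smul_eq_mul]

lemma one_add_mul_div_mul_inv_sub_one {a m u : ℝ} (ha : a ≠ 0) (hm : m ≠ 0) (hu : u ≠ 0) :
    1 + a * (m / a * (u⁻¹ - 1)) / m = u⁻¹ := by
  field_simp
  ring

lemma div_sq_mul_fDensity_mul_inv_sub_one {a m u : ℝ} (ha : 0 < a) (hm : 0 < m)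
    (hu₀ : 0 < u) (hu₁ : u < 1) :
    m / a / u ^ 2 * fDensity a m (m / a * (u⁻¹ - 1)) = betaPDFReal (m / 2) (a / 2) u := by
  have hx : m / a * (u⁻¹ - 1) = (a / m)⁻¹ * ((1 - u) * u⁻¹) := by field_simp
  have hu_pow : u ^ ((a + m) / 2) = u ^ (a / 2 - 1) * u ^ (m / 2 - 1) * u ^ 2 := by
    rw [← rpow_natCast, ← rpow_add hu₀, ← rpow_add hu₀]
    congr 1
    push_cast
    ring
  have ham_pow : (a / m) ^ (a / 2) = a / m * (a / m) ^ (a / 2 - 1) := by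
    rw [← rpow_one_add' (by positivity) (by simpa using ha.ne')]; ring_nf
  rw [betaPDFReal, if_pos ⟨hu₀, hu₁⟩, fDensity,
    one_add_mul_div_mul_inv_sub_one ha.ne' hm.ne' hu₀.ne', hx, ProbabilityTheory.beta,
    mul_rpow (by positivity) (by positivity), mul_rpow (sub_pos.2 hu₁).le (by positivity),
    inv_rpow (by positivity), inv_rpow hu₀.le, inv_rpow hu₀.le, rpow_neg hu₀.le, inv_inv,
    hu_pow, ham_pow, show m / 2 + a / 2 = (a + m) / 2 by ring]
  have := rpow_pos_of_pos hu₀ (a / 2 - 1)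
  have := rpow_pos_of_pos (div_pos ha hm) (a / 2 - 1)
  field_simp

lemma integral_log_mul_fDensity {a m : ℝ} (ha : 0 < a) (hm : 0 < m) :
    ∫ x in Ioi 0, log (1 + a * x / m) * fDensity a m x
      = digamma ((a + m) / 2) - digamma (m / 2) := by
  have h : ∀ u ∈ Ioo (0 : ℝ) 1,
      m / a / u ^ 2 * (log (1 + a * (m / a * (u⁻¹ - 1)) / m) * fDensity a m (m / a * (u⁻¹ - 1)))
        = -log u * betaPDFReal (m / 2) (a / 2) u := fun u ⟨hu₀, hu₁⟩ ↦ by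
    rw [← div_sq_mul_fDensity_mul_inv_sub_one ha hm hu₀ hu₁,
      one_add_mul_div_mul_inv_sub_one ha.ne' hm.ne' hu₀.ne', log_inv]
    ring
  rw [integral_Ioi_zero_eq_integral_Ioo_mul_inv_sub_one (div_pos hm ha),
    setIntegral_congr_fun measurableSet_Ioo h,
    integral_neg_log_mul_betaPDFReal (half_pos hm) (half_pos ha), add_div, add_comm]

theorem stmt_6 (b N : ℕ) (hb : 1 ≤ b) (hN : b + 2 ≤ N) :
    ∫ x in Set.Ioi (0 : ℝ),
        (N : ℝ) * Real.log (1 + (b : ℝ) * x / ((N : ℝ) - b - 1)) *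
          fDensity (b : ℝ) ((N : ℝ) - b - 1) x
      = (N : ℝ) *
          (digamma (((N : ℝ) - 1) / 2) - digamma (((N : ℝ) - b - 1) / 2)) := by
  have hb' : (0 : ℝ) < b := by exact_mod_cast hb
  have hm : (0 : ℝ) < N - b - 1 := by
    have : (b : ℝ) + 2 ≤ N := by exact_mod_cast hN
    linarith
  simp_rw [mul_assoc]
  rw [integral_const_mul, integral_log_mul_fDensity hb' hm,
    show (b : ℝ) + (N - b - 1) = N - 1 by ring]
end
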